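/- Let p, q ∈ 𝔻² with |p₂| < |p₁|, |q₂| < |q₁|, and m(p₂/p₁, q₂/q₁) < m(p₁, q₁). Then l_{𝔻²}((0,0); p, q) = c_{𝔻²}((0,0); p, q) = log|p₁·q₁|. -/

import Mathlib

/-!
The value `log |p₁ q₁|` is attained by both functions, and `c ≤ l` always holds. For `c` take
`F(z) = m_{p₁}(z₁) m_{q₁}(z₁)`. For `l` take the disc `λ ↦ (λ, λ h(λ))` with `λ₁ = p₁`, `λ₂ = q₁`,
where `h = m_a ∘ (k · m_{p₁})`, `a = p₂ / p₁`, `k = m_a(q₂ / q₁) / m_{p₁}(q₁)`, solves the two-point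
Pick problem `h(p₁) = p₂ / p₁`, `h(q₁) = q₂ / q₁`; the hypothesis on the Möbius distances says
exactly that `|k| ≤ 1`. Finally `c ≤ l` because `F ∘ ψ` vanishes at `λ₁ ≠ λ₂`, so the Schwarz
lemma with two zeros gives `|F(0)| ≤ |λ₁ λ₂|`.
-/

open Complex Metric Set ComplexConjugate

noncomputable section

/-- The disc automorphism `m_c` exchanging `c` and `0`; `‖mobius a b‖` is the Möbius distance
`m(a, b)`. -/
def mobius (c z : ℂ) : ℂ := (c - z) / (1 - conj c * z)

section Mobius

variable {c z : ℂ}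

lemma one_sub_conj_mul_ne_zero (hc : ‖c‖ < 1) (hz : ‖z‖ < 1) : 1 - conj c * z ≠ 0 := by
  have hlt : ‖conj c * z‖ < 1 := by
    rw [norm_mul, Complex.norm_conj]
    exact mul_lt_one_of_nonneg_of_lt_one_left (norm_nonneg c) hc hz.le
  refine sub_ne_zero.2 fun h => ?_
  rw [← h, norm_one] at hlt
  exact hlt.false

lemma normSq_one_sub_conj_mul_sub_normSq_sub (c z : ℂ) :
    normSq (1 - conj c * z) - normSq (c - z) = (1 - normSq c) * (1 - normSq z) := by
  simp only [normSq_apply, sub_re, sub_im, mul_re, mul_im, one_re, one_im, conj_re, conj_im]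
  ring

lemma norm_mobius_lt_one (hc : ‖c‖ < 1) (hz : ‖z‖ < 1) : ‖mobius c z‖ < 1 := by
  have hden := norm_pos_iff.2 (one_sub_conj_mul_ne_zero hc hz)
  rw [mobius, norm_div, div_lt_one hden, ← sq_lt_sq₀ (norm_nonneg _) hden.le,
    Complex.sq_norm, Complex.sq_norm]
  have hc2 : normSq c < 1 := by rw [← Complex.sq_norm]; nlinarith [norm_nonneg c]
  have hz2 : normSq z < 1 := by rw [← Complex.sq_norm]; nlinarith [norm_nonneg z]
  nlinarith [normSq_one_sub_conj_mul_sub_normSq_sub c z]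

lemma mapsTo_mobius (hc : ‖c‖ < 1) : MapsTo (mobius c) (ball 0 1) (ball 0 1) := fun z hz => by
  rw [mem_ball_zero_iff] at hz ⊢
  exact norm_mobius_lt_one hc hz

@[simp]
lemma mobius_self (c : ℂ) : mobius c c = 0 := by simp [mobius]

@[simp]
lemma mobius_zero (c : ℂ) : mobius c 0 = c := by simp [mobius]

lemma mobius_ne_zero (hc : ‖c‖ < 1) (hz : ‖z‖ < 1) (hcz : c ≠ z) : mobius c z ≠ 0 :=
  div_ne_zero (sub_ne_zero.2 hcz) (one_sub_conj_mul_ne_zero hc hz)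

lemma mobius_mobius (hc : ‖c‖ < 1) (hz : ‖z‖ < 1) : mobius c (mobius c z) = z := by
  have hcz := one_sub_conj_mul_ne_zero hc hz
  have hnum : c - (c - z) / (1 - conj c * z) = z * (1 - conj c * c) / (1 - conj c * z) := by
    rw [eq_div_iff hcz, sub_mul, div_mul_cancel₀ _ hcz]; ring
  have hden : 1 - conj c * ((c - z) / (1 - conj c * z)) = (1 - conj c * c) / (1 - conj c * z) := by
    rw [eq_div_iff hcz, sub_mul, mul_assoc, div_mul_cancel₀ _ hcz]; ring
  rw [mobius, mobius, hnum, hden, div_div_div_cancel_right₀ hcz,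
    mul_div_cancel_right₀ _ (one_sub_conj_mul_ne_zero hc hc)]

lemma differentiableOn_mobius (hc : ‖c‖ < 1) : DifferentiableOn ℂ (mobius c) (ball 0 1) :=
  fun _ hz => ((differentiableAt_const c).sub differentiableAt_id).div
    ((differentiableAt_const 1).sub ((differentiableAt_const _).mul differentiableAt_id))
    (one_sub_conj_mul_ne_zero hc (mem_ball_zero_iff.1 hz)) |>.differentiableWithinAt

end Mobius

lemma exists_mapsTo_ball_interpolating {z₁ z₂ w₁ w₂ : ℂ} (hz₁ : ‖z₁‖ < 1) (hz₂ : ‖z₂‖ < 1)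
    (hw₁ : ‖w₁‖ < 1) (hw₂ : ‖w₂‖ < 1) (hz : z₁ ≠ z₂)
    (hw : ‖mobius w₁ w₂‖ ≤ ‖mobius z₁ z₂‖) :
    ∃ f : ℂ → ℂ, DifferentiableOn ℂ f (ball 0 1) ∧ MapsTo f (ball 0 1) (ball 0 1) ∧
      f z₁ = w₁ ∧ f z₂ = w₂ := by
  have hm := mobius_ne_zero hz₁ hz₂ hz
  set k := mobius w₁ w₂ / mobius z₁ z₂
  have hk : ‖k‖ ≤ 1 := by rw [norm_div]; exact div_le_one_of_le₀ hw (norm_nonneg _)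
  have hscale : MapsTo (fun z => k * mobius z₁ z) (ball 0 1) (ball 0 1) := fun z hz => by
    rw [mem_ball_zero_iff, norm_mul]
    exact mul_lt_one_of_nonneg_of_lt_one_right hk (norm_nonneg _)
      (mem_ball_zero_iff.1 (mapsTo_mobius hz₁ hz))
  refine ⟨mobius w₁ ∘ fun z => k * mobius z₁ z, ?_, (mapsTo_mobius hw₁).comp hscale, ?_, ?_⟩
  · exact (differentiableOn_mobius hw₁).comp
      ((differentiableOn_const k).mul (differentiableOn_mobius hz₁)) hscale
  · simp
  · simp [k, div_mul_cancel₀ _ hm, mobius_mobius hw₁ hw₂]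

section Schwarz

variable {g : ℂ → ℂ}

-- Schwarz lemma for `g ∘ m_u`, which vanishes at `0`, since `m_u` is an involution.
lemma exists_eq_mobius_mul_of_mapsTo (hg : DifferentiableOn ℂ g (ball 0 1))
    (hmaps : MapsTo g (ball 0 1) (closedBall 0 1)) {u : ℂ} (hu : ‖u‖ < 1) (hgu : g u = 0) :
    ∃ g₁ : ℂ → ℂ, DifferentiableOn ℂ g₁ (ball 0 1) ∧ MapsTo g₁ (ball 0 1) (closedBall 0 1) ∧
      ∀ z ∈ ball (0 : ℂ) 1, g z = mobius u z * g₁ z := by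
  set G := g ∘ mobius u
  have hG : DifferentiableOn ℂ G (ball 0 1) :=
    hg.comp (differentiableOn_mobius hu) (mapsTo_mobius hu)
  have hG0 : G 0 = 0 := by simp [G, hgu]
  have hGmaps : MapsTo G (ball 0 1) (closedBall (G 0) 1) := by
    rw [hG0]; exact hmaps.comp (mapsTo_mobius hu)
  refine ⟨dslope G 0 ∘ mobius u, ?_, ?_, fun z hz => ?_⟩
  · exact ((differentiableOn_dslope (isOpen_ball.mem_nhds (mem_ball_self one_pos))).2 hG).comp
      (differentiableOn_mobius hu) (mapsTo_mobius hu)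
  · intro z hz
    rw [mem_closedBall_zero_iff, Function.comp_apply]
    simpa using norm_dslope_le_div_of_mapsTo_ball hG hGmaps (mapsTo_mobius hu hz)
  · have := sub_smul_dslope G 0 (mobius u z)
    simp only [sub_zero, smul_eq_mul, hG0] at this
    rw [Function.comp_apply, this]
    simp [G, mobius_mobius hu (mem_ball_zero_iff.1 hz)]

lemma norm_le_norm_mobius_mul_norm_mobius (hg : DifferentiableOn ℂ g (ball 0 1))
    (hmaps : MapsTo g (ball 0 1) (closedBall 0 1)) {u v : ℂ} (hu : ‖u‖ < 1) (hv : ‖v‖ < 1)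
    (huv : u ≠ v) (hgu : g u = 0) (hgv : g v = 0) {z : ℂ} (hz : ‖z‖ < 1) :
    ‖g z‖ ≤ ‖mobius u z‖ * ‖mobius v z‖ := by
  obtain ⟨g₁, hg₁, hmaps₁, hgg₁⟩ := exists_eq_mobius_mul_of_mapsTo hg hmaps hu hgu
  have hg₁v : g₁ v = 0 := by
    have := hgg₁ v (mem_ball_zero_iff.2 hv)
    rw [hgv, eq_comm, mul_eq_zero] at this
    exact this.resolve_left (mobius_ne_zero hu hv huv)
  obtain ⟨g₂, -, hmaps₂, hg₁g₂⟩ := exists_eq_mobius_mul_of_mapsTo hg₁ hmaps₁ hv hg₁v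
  have hzb := mem_ball_zero_iff.2 hz
  have hg₂z : ‖g₂ z‖ ≤ 1 := mem_closedBall_zero_iff.1 (hmaps₂ hzb)
  rw [hgg₁ z hzb, hg₁g₂ z hzb, norm_mul, norm_mul, ← mul_assoc]
  exact mul_le_of_le_one_right (by positivity) hg₂z

end Schwarz

/-- Its infimum is `l_{𝔻²}((0,0); p, q)`. -/
def lempertSet (p q : ℂ × ℂ) : Set ℝ :=
  {r : ℝ | ∃ (ψ : ℂ → ℂ × ℂ) (l1 l2 : ℂ),
    DifferentiableOn ℂ ψ (ball (0 : ℂ) 1) ∧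
    (∀ z ∈ ball (0 : ℂ) 1, ψ z ∈ ball (0 : ℂ) 1 ×ˢ ball (0 : ℂ) 1) ∧
    l1 ∈ ball (0 : ℂ) 1 ∧ l2 ∈ ball (0 : ℂ) 1 ∧
    ψ 0 = (0, 0) ∧ ψ l1 = p ∧ ψ l2 = q ∧
    Real.exp r = ‖l1 * l2‖}

/-- Its supremum is `c_{𝔻²}((0,0); p, q)`. -/
def caratheodorySet (p q : ℂ × ℂ) : Set ℝ :=
  {r : ℝ | ∃ F : ℂ × ℂ → ℂ,
    DifferentiableOn ℂ F (ball (0 : ℂ) 1 ×ˢ ball (0 : ℂ) 1) ∧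
    (∀ w ∈ ball (0 : ℂ) 1 ×ˢ ball (0 : ℂ) 1, F w ∈ ball (0 : ℂ) 1) ∧
    F p = 0 ∧ F q = 0 ∧
    Real.exp r = ‖F (0, 0)‖}

lemma le_of_mem_caratheodorySet_of_mem_lempertSet {p q : ℂ × ℂ} (hpq : p ≠ q) {r s : ℝ}
    (hr : r ∈ caratheodorySet p q) (hs : s ∈ lempertSet p q) : r ≤ s := by
  obtain ⟨F, hFd, hFmaps, hFp, hFq, hr⟩ := hr
  obtain ⟨ψ, l1, l2, hψd, hψmaps, hl1, hl2, hψ0, hψl1, hψl2, hs⟩ := hs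
  have hl : l1 ≠ l2 := by rintro rfl; exact hpq (hψl1.symm.trans hψl2)
  have hg : DifferentiableOn ℂ (F ∘ ψ) (ball 0 1) := hFd.comp hψd hψmaps
  have hgmaps : MapsTo (F ∘ ψ) (ball 0 1) (closedBall 0 1) :=
    fun z hz => ball_subset_closedBall (hFmaps _ (hψmaps z hz))
  have := norm_le_norm_mobius_mul_norm_mobius hg hgmaps (mem_ball_zero_iff.1 hl1)
    (mem_ball_zero_iff.1 hl2) hl (by simp [hψl1, hFp]) (by simp [hψl2, hFq])
    (z := 0) (by simp)
  rw [← Real.exp_le_exp, hr, hs, norm_mul]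
  simpa [hψ0] using this

lemma log_norm_mul_mem_caratheodorySet {p q : ℂ × ℂ} (hp : ‖p.1‖ < 1) (hq : ‖q.1‖ < 1)
    (hp0 : p.1 ≠ 0) (hq0 : q.1 ≠ 0) : Real.log ‖p.1 * q.1‖ ∈ caratheodorySet p q := by
  refine ⟨fun w => mobius p.1 w.1 * mobius q.1 w.1, ?_, fun w hw => ?_, by simp, by simp, ?_⟩
  · have hfst : MapsTo Prod.fst (ball (0 : ℂ) 1 ×ˢ ball (0 : ℂ) 1) (ball 0 1) :=
      fun w hw => hw.1
    exact ((differentiableOn_mobius hp).comp differentiableOn_fst hfst).mul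
      ((differentiableOn_mobius hq).comp differentiableOn_fst hfst)
  · have hw1 := mem_ball_zero_iff.1 hw.1
    rw [mem_ball_zero_iff, norm_mul]
    exact mul_lt_one_of_nonneg_of_lt_one_left (norm_nonneg _) (norm_mobius_lt_one hp hw1)
      (norm_mobius_lt_one hq hw1).le
  · simp only [mobius_zero]
    exact Real.exp_log (norm_pos_iff.2 (mul_ne_zero hp0 hq0))

lemma log_norm_mul_mem_lempertSet {p q : ℂ × ℂ} (hp : ‖p.1‖ < 1) (hq : ‖q.1‖ < 1)
    (hp₂ : ‖p.2‖ < ‖p.1‖) (hq₂ : ‖q.2‖ < ‖q.1‖) (hpq : p.1 ≠ q.1)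
    (hm : ‖mobius (p.2 / p.1) (q.2 / q.1)‖ ≤ ‖mobius p.1 q.1‖) :
    Real.log ‖p.1 * q.1‖ ∈ lempertSet p q := by
  have hp0 : 0 < ‖p.1‖ := (norm_nonneg _).trans_lt hp₂
  have hq0 : 0 < ‖q.1‖ := (norm_nonneg _).trans_lt hq₂
  obtain ⟨h, hd, hmaps, hhp, hhq⟩ := exists_mapsTo_ball_interpolating hp hq
    (by rwa [norm_div, div_lt_one hp0]) (by rwa [norm_div, div_lt_one hq0]) hpq hm
  refine ⟨fun z => (z, z * h z), p.1, q.1, differentiableOn_id.prodMk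
    (differentiableOn_id.mul hd), fun z hz => ⟨hz, ?_⟩, mem_ball_zero_iff.2 hp,
    mem_ball_zero_iff.2 hq, by simp, ?_, ?_, Real.exp_log (by simp [hp0, hq0])⟩
  · rw [mem_ball_zero_iff, norm_mul]
    exact mul_lt_one_of_nonneg_of_lt_one_left (norm_nonneg _) (mem_ball_zero_iff.1 hz)
      (mem_ball_zero_iff.1 (hmaps hz)).le
  · simp [hhp, mul_div_cancel₀ _ (norm_pos_iff.1 hp0)]
  · simp [hhq, mul_div_cancel₀ _ (norm_pos_iff.1 hq0)]

end

theorem lempert_eq_caratheodory_one_dim_case_general (p1 p2 q1 q2 : ℂ)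
    (hp1 : p1 ∈ ball (0 : ℂ) 1)
    (hq1 : q1 ∈ ball (0 : ℂ) 1)
    (hp : ‖p2‖ < ‖p1‖) (hq : ‖q2‖ < ‖q1‖)
    (hm : ‖p2 / p1 - q2 / q1‖ /
        ‖1 - (starRingEnd ℂ) (p2 / p1) * (q2 / q1)‖ <
      ‖p1 - q1‖ / ‖1 - (starRingEnd ℂ) p1 * q1‖) :
    sInf {r : ℝ | ∃ (ψ : ℂ → ℂ × ℂ) (l1 l2 : ℂ),
        DifferentiableOn ℂ ψ (ball (0 : ℂ) 1) ∧
        (∀ z ∈ ball (0 : ℂ) 1, ψ z ∈ ball (0 : ℂ) 1 ×ˢ ball (0 : ℂ) 1) ∧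
        l1 ∈ ball (0 : ℂ) 1 ∧ l2 ∈ ball (0 : ℂ) 1 ∧
        ψ 0 = (0, 0) ∧ ψ l1 = (p1, p2) ∧ ψ l2 = (q1, q2) ∧
        Real.exp r = ‖l1 * l2‖}
      = Real.log ‖p1 * q1‖ ∧
    sSup {r : ℝ | ∃ F : ℂ × ℂ → ℂ,
        DifferentiableOn ℂ F (ball (0 : ℂ) 1 ×ˢ ball (0 : ℂ) 1) ∧
        (∀ w ∈ ball (0 : ℂ) 1 ×ˢ ball (0 : ℂ) 1, F w ∈ ball (0 : ℂ) 1) ∧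
        F (p1, p2) = 0 ∧ F (q1, q2) = 0 ∧
        Real.exp r = ‖F (0, 0)‖}
      = Real.log ‖p1 * q1‖ := by
  rw [mem_ball_zero_iff] at hp1 hq1
  have hp0 : p1 ≠ 0 := norm_pos_iff.1 ((norm_nonneg p2).trans_lt hp)
  have hq0 : q1 ≠ 0 := norm_pos_iff.1 ((norm_nonneg q2).trans_lt hq)
  have hpq : p1 ≠ q1 := by
    rintro rfl
    simp only [sub_self, norm_zero, zero_div] at hm
    exact (div_nonneg (norm_nonneg _) (norm_nonneg _)).not_gt hm
  have hL : Real.log ‖p1 * q1‖ ∈ lempertSet (p1, p2) (q1, q2) :=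
    log_norm_mul_mem_lempertSet hp1 hq1 hp hq hpq (by simpa only [mobius, norm_div] using hm.le)
  have hC : Real.log ‖p1 * q1‖ ∈ caratheodorySet (p1, p2) (q1, q2) :=
    log_norm_mul_mem_caratheodorySet hp1 hq1 hp0 hq0
  have hle : ∀ {r s : ℝ}, r ∈ caratheodorySet (p1, p2) (q1, q2) →
      s ∈ lempertSet (p1, p2) (q1, q2) → r ≤ s :=
    le_of_mem_caratheodorySet_of_mem_lempertSet fun h => hpq (congrArg Prod.fst h)
  exact ⟨IsLeast.csInf_eq ⟨hL, fun s hs => hle hC hs⟩,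
    IsGreatest.csSup_eq ⟨hC, fun r hr => hle hr hL⟩⟩

theorem lempert_eq_caratheodory_one_dim_case (p1 p2 q1 q2 : ℂ)
    (hp1 : p1 ∈ ball (0 : ℂ) 1) (hp2 : p2 ∈ ball (0 : ℂ) 1)
    (hq1 : q1 ∈ ball (0 : ℂ) 1) (hq2 : q2 ∈ ball (0 : ℂ) 1)
    (hp : ‖p2‖ < ‖p1‖) (hq : ‖q2‖ < ‖q1‖)
    (hm : ‖p2 / p1 - q2 / q1‖ /
        ‖1 - (starRingEnd ℂ) (p2 / p1) * (q2 / q1)‖ <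
      ‖p1 - q1‖ / ‖1 - (starRingEnd ℂ) p1 * q1‖) :
    sInf {r : ℝ | ∃ (ψ : ℂ → ℂ × ℂ) (l1 l2 : ℂ),
        DifferentiableOn ℂ ψ (ball (0 : ℂ) 1) ∧
        (∀ z ∈ ball (0 : ℂ) 1, ψ z ∈ ball (0 : ℂ) 1 ×ˢ ball (0 : ℂ) 1) ∧
        l1 ∈ ball (0 : ℂ) 1 ∧ l2 ∈ ball (0 : ℂ) 1 ∧
        ψ 0 = (0, 0) ∧ ψ l1 = (p1, p2) ∧ ψ l2 = (q1, q2) ∧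
        Real.exp r = ‖l1 * l2‖}
      = Real.log ‖p1 * q1‖ ∧
    sSup {r : ℝ | ∃ F : ℂ × ℂ → ℂ,
        DifferentiableOn ℂ F (ball (0 : ℂ) 1 ×ˢ ball (0 : ℂ) 1) ∧
        (∀ w ∈ ball (0 : ℂ) 1 ×ˢ ball (0 : ℂ) 1, F w ∈ ball (0 : ℂ) 1) ∧
        F (p1, p2) = 0 ∧ F (q1, q2) = 0 ∧
        Real.exp r = ‖F (0, 0)‖}
      = Real.log ‖p1 * q1‖ :=
  lempert_eq_caratheodory_one_dim_case_general p1 p2 q1 q2 hp1 hq1 hp hq hm
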